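/- Let m ≥ 1 be an integer, γ ∈ (0, π/2) with γ < π/(2m), and p = (R sin ψ, R cos ψ) ∈ W_γ with R > 0 and π/2 − γ < ψ < π/2. Then every closed (2m+1)-bounce billiard path based at p whose first bounce lies on ℓ₀ has total length 2R·|cos(ψ − mγ)|, and every closed (2m+1)-bounce billiard path based at p whose first bounce lies on ℓ_γ has total length 2R·|cos(ψ + (m+1)γ)|. -/

import Mathlib

/-!
Unfold the path: reflecting the rest of the path in each mirror it hits turns the closed
billiard path into a straight segment from `p` to `T p`, where `T` is the product of the
`2m+1` reflections, so the length is `‖T p - p‖`. An odd product of line reflections is a line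
reflection; for alternating mirrors at angles `a, b, a, …, a` it is the reflection in the line at
angle `a + m (a - b)`, that is `-mγ` or `(m+1)γ`. The distance from
`p = (R sin ψ, R cos ψ)` to its image in the line at angle `α` is `2R |cos (ψ + α)|`.
-/

open Real

noncomputable section

/-- The Euclidean plane. -/
abbrev E2 := EuclideanSpace ℝ (Fin 2)

/-- Construct a point of the plane from its coordinates. -/
def pt (x y : ℝ) : E2 := WithLp.toLp 2 ![x, y]

/-- The open wedge of opening angle `γ`, bounded by the horizontal line `{y = 0}`
and the line `{y = x·tan γ}`. -/
def wedge (γ : ℝ) : Set E2 := {p | 0 < p 0 ∧ 0 < p 1 ∧ p 1 < p 0 * Real.tan γ}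

/-- A direction vector of the boundary line: the horizontal line if `horiz`, the
line `{y = x·tan γ}` otherwise. -/
def lineDir (γ : ℝ) (horiz : Bool) : E2 :=
  if horiz then pt 1 0 else pt (Real.cos γ) (Real.sin γ)

/-- Membership of the corresponding boundary line. -/
def onBoundary (γ : ℝ) (horiz : Bool) (p : E2) : Prop :=
  if horiz then p 1 = 0 else p 1 = p 0 * Real.tan γ

/-- The linear reflection of `ℝ²` across the `1`-dimensional subspace spanned by `d`,
applied to `v` (for `d ≠ 0`). -/
def reflDir (d v : E2) : E2 :=
  (2 * (inner ℝ v d : ℝ) / (inner ℝ d d : ℝ)) • d - v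

/-- A closed `n`-bounce billiard path based at the point `p` of the wedge `W_γ`:
a sequence `q 0 = p, q 1, …, q n, q (n+1) = p` with consecutive points distinct,
whose intermediate points lie alternately on the two boundary lines (minus the
vertex), whose open segments lie in the open wedge, and which satisfies the law
of reflection at each bounce. -/
structure ClosedBounce (γ : ℝ) (p : E2) (n : ℕ) where
  q : ℕ → E2
  /-- `horiz k` records whether the `k`-th bounce is on the horizontal line `ℓ₀`. -/
  horiz : ℕ → Bool
  alt : ∀ k, 1 ≤ k → k < n → horiz (k + 1) = !horiz k
  start : q 0 = p
  closes : q (n + 1) = p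
  distinct : ∀ k ≤ n, q k ≠ q (k + 1)
  bounce_ne_vertex : ∀ k, 1 ≤ k → k ≤ n → q k ≠ 0
  onLine : ∀ k, 1 ≤ k → k ≤ n → onBoundary γ (horiz k) (q k)
  segs_in_wedge : ∀ k ≤ n, ∀ t : ℝ, 0 < t → t < 1 →
    (1 - t) • q k + t • q (k + 1) ∈ wedge γ
  reflects : ∀ k, 1 ≤ k → k ≤ n →
    (‖q (k + 1) - q k‖)⁻¹ • (q (k + 1) - q k) =
      reflDir (lineDir γ (horiz k)) ((‖q k - q (k - 1)‖)⁻¹ • (q k - q (k - 1)))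

/-- The total length of a closed `n`-bounce billiard path. -/
def totalLength {γ : ℝ} {p : E2} {n : ℕ} (P : ClosedBounce γ p n) : ℝ :=
  ∑ k ∈ Finset.range (n + 1), ‖P.q (k + 1) - P.q k‖

section Unfolding

variable {E : Type*} [NormedAddCommGroup E] [NormedSpace ℝ E]

/-- Maps the `k`-th leg of a path reflected successively by `σ 1, σ 2, …` onto the line carrying
its first leg. -/
def unfolding (σ : ℕ → E ≃ₗᵢ[ℝ] E) : ℕ → E ≃ₗᵢ[ℝ] E
  | 0 => LinearIsometryEquiv.refl ℝ E
  | k + 1 => (σ (k + 1)).symm.trans (unfolding σ k)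

def legDir (q : ℕ → E) (k : ℕ) : E := ‖q (k + 1) - q k‖⁻¹ • (q (k + 1) - q k)

variable (σ : ℕ → E ≃ₗᵢ[ℝ] E) (q : ℕ → E) {n : ℕ}

theorem unfolding_zero_apply (x : E) : unfolding σ 0 x = x := rfl

theorem unfolding_succ_apply (k : ℕ) (x : E) :
    unfolding σ (k + 1) x = unfolding σ k ((σ (k + 1)).symm x) := rfl

theorem unfolding_legDir (hrefl : ∀ k < n, legDir q (k + 1) = σ (k + 1) (legDir q k)) :
    ∀ k ≤ n, unfolding σ k (legDir q k) = legDir q 0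
  | 0, _ => rfl
  | k + 1, hk => by
    rw [unfolding_succ_apply, hrefl k hk, LinearIsometryEquiv.symm_apply_apply]
    exact unfolding_legDir hrefl k (by omega)

theorem sum_unfolding_sub (hfix : ∀ k, 1 ≤ k → k ≤ n → σ k (q k) = q k) :
    ∀ k ≤ n, ∑ i ∈ Finset.range (k + 1), unfolding σ i (q (i + 1) - q i) =
      unfolding σ k (q (k + 1)) - q 0
  | 0, _ => by simp [unfolding_zero_apply]
  | k + 1, hk => by
    have hq : (σ (k + 1)).symm (q (k + 1)) = q (k + 1) := by
      rw [LinearIsometryEquiv.symm_apply_eq, hfix (k + 1) k.succ_pos hk]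
    rw [Finset.sum_range_succ, sum_unfolding_sub hfix k (by omega), map_sub,
      unfolding_succ_apply σ k (q (k + 1)), hq]
    abel

theorem norm_smul_inv_norm_smul (v : E) : ‖v‖ • (‖v‖⁻¹ • v) = v := by
  rcases eq_or_ne v 0 with rfl | hv
  · simp
  · exact smul_inv_smul₀ (norm_ne_zero_iff.mpr hv) v

theorem sum_norm_sub_eq_norm_unfolding_sub (h01 : q 0 ≠ q 1)
    (hfix : ∀ k, 1 ≤ k → k ≤ n → σ k (q k) = q k)
    (hrefl : ∀ k < n, legDir q (k + 1) = σ (k + 1) (legDir q k)) :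
    ∑ k ∈ Finset.range (n + 1), ‖q (k + 1) - q k‖ = ‖unfolding σ n (q (n + 1)) - q 0‖ := by
  have hunit : ‖legDir q 0‖ = 1 := norm_smul_inv_norm (sub_ne_zero.mpr h01.symm)
  have hsum : ∑ k ∈ Finset.range (n + 1), unfolding σ k (q (k + 1) - q k) =
      (∑ k ∈ Finset.range (n + 1), ‖q (k + 1) - q k‖) • legDir q 0 := by
    rw [Finset.sum_smul]
    refine Finset.sum_congr rfl fun k hk => ?_
    rw [← unfolding_legDir σ q hrefl k (Finset.mem_range_succ_iff.mp hk), legDir, ← map_smul,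
      norm_smul_inv_norm_smul]
  rw [← sum_unfolding_sub σ q hfix n le_rfl, hsum, norm_smul, hunit, mul_one, Real.norm_eq_abs,
    abs_of_nonneg (Finset.sum_nonneg fun _ _ => norm_nonneg _)]

end Unfolding

open Submodule in
theorem reflDir_eq_reflection (d v : E2) : reflDir d v = (ℝ ∙ d).reflection v := by
  rw [reflection_singleton_apply, reflDir, real_inner_self_eq_norm_sq, real_inner_comm]
  simp [mul_div_assoc, mul_smul, ofNat_smul_eq_nsmul]

theorem mem_span_lineDir {γ : ℝ} (hγ : Real.cos γ ≠ 0) {b : Bool} {q : E2}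
    (hq : onBoundary γ b q) : q ∈ ℝ ∙ lineDir γ b := by
  rw [Submodule.mem_span_singleton]
  cases b with
  | true =>
    refine ⟨q 0, ?_⟩
    ext i; fin_cases i <;> simp_all [lineDir, onBoundary, pt]
  | false =>
    refine ⟨q 0 / Real.cos γ, ?_⟩
    ext i; fin_cases i
    · simp [lineDir, pt, hγ]
    · simp_all [lineDir, onBoundary, pt, Real.tan_eq_sin_div_cos]
      ring

open Complex ComplexConjugate

theorem Complex.reflection_span_singleton {u : ℂ} (hu : ‖u‖ = 1) (z : ℂ) :
    (ℝ ∙ u).reflection z = u ^ 2 * conj z := by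
  have hu' : u * conj u = 1 := by
    rw [mul_conj, normSq_eq_norm_sq, hu]; norm_num
  have hre : (2 * (z * conj u).re : ℂ) = z * conj u + conj (z * conj u) := by
    rw [add_conj]; push_cast; ring
  rw [Submodule.reflection_singleton_apply, Complex.inner, hu]
  simp only [RCLike.ofReal_real_eq_id, id, one_pow, div_one, real_smul, nsmul_eq_mul]
  push_cast
  rw [← mul_assoc, hre, map_mul, conj_conj]
  linear_combination z * hu'

def toC : E2 ≃ₗᵢ[ℝ] ℂ := Complex.orthonormalBasisOneI.repr.symm

theorem toC_pt (x y : ℝ) : toC (pt x y) = x + y * I := by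
  simp [toC, Complex.orthonormalBasisOneI_repr_symm_apply, pt]

def lineAngle (γ : ℝ) (horiz : Bool) : ℝ := if horiz then 0 else γ

theorem toC_lineDir (γ : ℝ) (b : Bool) : toC (lineDir γ b) = exp (lineAngle γ b * I) := by
  cases b <;> simp [lineDir, lineAngle, toC_pt, exp_mul_I]

theorem toC_reflection_span_lineDir (γ : ℝ) (b : Bool) (x : E2) :
    toC ((ℝ ∙ lineDir γ b).reflection x) = exp (2 * lineAngle γ b * I) * conj (toC x) := by
  have hmap : (ℝ ∙ lineDir γ b).map (toC.toLinearEquiv : E2 →ₗ[ℝ] ℂ) =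
      ℝ ∙ exp (lineAngle γ b * I) := by
    rw [Submodule.map_span, Set.image_singleton]
    exact congrArg _ (congrArg _ (toC_lineDir γ b))
  have := Submodule.reflection_map_apply toC (ℝ ∙ lineDir γ b) (toC x)
  simp only [hmap, LinearIsometryEquiv.symm_apply_apply] at this
  rw [Complex.reflection_span_singleton (norm_exp_ofReal_mul_I _)] at this
  rw [← this, ← Complex.exp_nat_mul, Nat.cast_ofNat, mul_assoc]

def mirror (γ : ℝ) (horiz : ℕ → Bool) (k : ℕ) : E2 ≃ₗᵢ[ℝ] E2 :=
  (ℝ ∙ lineDir γ (horiz k)).reflection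

namespace ClosedBounce

variable {γ : ℝ} {p : E2} {n : ℕ} (P : ClosedBounce γ p n)

theorem totalLength_eq_norm_unfolding_sub (hγ : Real.cos γ ≠ 0) :
    totalLength P = ‖unfolding (mirror γ P.horiz) n p - p‖ := by
  have hrefl (k : ℕ) (hk : k < n) :
      legDir P.q (k + 1) = mirror γ P.horiz (k + 1) (legDir P.q k) := by
    have h := P.reflects (k + 1) k.succ_pos hk
    rw [Nat.add_sub_cancel, reflDir_eq_reflection] at h
    exact h
  have h := sum_norm_sub_eq_norm_unfolding_sub (mirror γ P.horiz) P.q (P.distinct 0 n.zero_le)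
    (fun k hk1 hkn => (Submodule.reflection_eq_self_iff _).mpr
      (mem_span_lineDir hγ (P.onLine k hk1 hkn)))
    hrefl
  rwa [P.closes, P.start] at h

theorem horiz_odd_and_even :
    ∀ i, (2 * i + 1 ≤ n → P.horiz (2 * i + 1) = P.horiz 1) ∧
      (2 * i + 2 ≤ n → P.horiz (2 * i + 2) = !P.horiz 1)
  | 0 => ⟨fun _ => rfl, fun h => P.alt 1 le_rfl (by omega)⟩
  | i + 1 => by
    have hodd : 2 * (i + 1) + 1 ≤ n → P.horiz (2 * (i + 1) + 1) = P.horiz 1 := fun h => by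
      rw [show 2 * (i + 1) + 1 = 2 * i + 2 + 1 by ring, P.alt (2 * i + 2) (by omega) (by omega),
        (horiz_odd_and_even i).2 (by omega), Bool.not_not]
    refine ⟨hodd, fun h => ?_⟩
    rw [P.alt (2 * (i + 1) + 1) (by omega) (by omega), hodd (by omega)]

end ClosedBounce

theorem toC_unfolding_mirror_odd (γ : ℝ) (horiz : ℕ → Bool) (c : Bool) (j : ℕ)
    (hodd : ∀ i ≤ j, horiz (2 * i + 1) = c) (heven : ∀ i < j, horiz (2 * i + 2) = !c)
    (x : E2) :
    toC (unfolding (mirror γ horiz) (2 * j + 1) x) =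
      exp (2 * ↑(lineAngle γ c + j * (lineAngle γ c - lineAngle γ !c)) * I) * conj (toC x) := by
  induction j generalizing x with
  | zero =>
    rw [unfolding_succ_apply, mirror, Submodule.reflection_symm, unfolding_zero_apply,
      toC_reflection_span_lineDir, hodd 0 le_rfl]
    simp
  | succ j ih =>
    rw [show 2 * (j + 1) + 1 = 2 * j + 1 + 1 + 1 by ring, unfolding_succ_apply,
      unfolding_succ_apply, ih (fun i hi => hodd i (by omega)) (fun i hi => heven i (by omega))]
    simp only [mirror, Submodule.reflection_symm]
    rw [toC_reflection_span_lineDir, toC_reflection_span_lineDir, heven j (by omega),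
      show 2 * j + 1 + 1 + 1 = 2 * (j + 1) + 1 by ring, hodd (j + 1) le_rfl]
    simp only [map_mul, map_neg, conj_conj, ← exp_conj, map_ofNat, conj_ofReal, conj_I]
    rw [← mul_assoc, ← mul_assoc, ← Complex.exp_add, ← Complex.exp_add]
    push_cast; ring_nf

theorem norm_exp_mul_conj_sub_self (α R ψ : ℝ) (hR : 0 ≤ R) :
    ‖exp (2 * α * I) * conj (toC (pt (R * Real.sin ψ) (R * Real.cos ψ))) -
      toC (pt (R * Real.sin ψ) (R * Real.cos ψ))‖ = 2 * R * |Real.cos (ψ + α)| := by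
  have hp : toC (pt (R * Real.sin ψ) (R * Real.cos ψ)) = I * R * exp (-ψ * I) := by
    rw [toC_pt, exp_mul_I, Complex.cos_neg, Complex.sin_neg]
    push_cast
    linear_combination (R * Complex.sin ψ) * I_sq
  have hfactor : exp (2 * α * I) * conj (I * R * exp (-ψ * I)) - I * R * exp (-ψ * I) =
      -(2 * R * Real.cos (ψ + α) : ℝ) * (I * exp (α * I)) := by
    simp only [map_mul, map_neg, conj_I, conj_ofReal, ← exp_conj]
    push_cast
    rw [Complex.cos]
    have e1 : exp (α * I * 2) * exp (I * ψ) = exp (α * I + I * ψ) * exp (α * I) := by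
      rw [← Complex.exp_add, ← Complex.exp_add]; ring_nf
    have e2 : exp (-(I * ψ)) = exp (-(α * I) - I * ψ) * exp (α * I) := by
      rw [← Complex.exp_add]; ring_nf
    ring_nf
    linear_combination (-I * R) * e1 + (-I * R) * e2
  rw [hp, hfactor, norm_mul, norm_mul, norm_I, norm_exp_ofReal_mul_I, norm_neg, norm_real,
    Real.norm_eq_abs, abs_mul, abs_mul, abs_of_nonneg hR, abs_two, mul_one, mul_one]

theorem ClosedBounce.totalLength_odd {γ R ψ : ℝ} (hγ : Real.cos γ ≠ 0) (hR : 0 ≤ R) {m : ℕ}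
    (P : ClosedBounce γ (pt (R * Real.sin ψ) (R * Real.cos ψ)) (2 * m + 1)) :
    totalLength P = 2 * R * |Real.cos (ψ +
      (lineAngle γ (P.horiz 1) + m * (lineAngle γ (P.horiz 1) - lineAngle γ !P.horiz 1)))| := by
  rw [P.totalLength_eq_norm_unfolding_sub hγ, ← toC.norm_map, map_sub,
    toC_unfolding_mirror_odd γ P.horiz (P.horiz 1) m
      (fun i _ => (P.horiz_odd_and_even i).1 (by omega))
      (fun i _ => (P.horiz_odd_and_even i).2 (by omega)),
    norm_exp_mul_conj_sub_self _ _ _ hR]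

theorem odd_bounce_length_general (m : ℕ) (γ : ℝ)
    (hγ0 : 0 < γ) (hγ1 : γ < π / 2)
    (R ψ : ℝ) (hR : 0 < R)
    (p : E2) (hp : p = pt (R * Real.sin ψ) (R * Real.cos ψ)) :
    (∀ P : ClosedBounce γ p (2 * m + 1), P.horiz 1 = true →
      totalLength P = 2 * R * |Real.cos (ψ - m * γ)|) ∧
    (∀ P : ClosedBounce γ p (2 * m + 1), P.horiz 1 = false →
      totalLength P = 2 * R * |Real.cos (ψ + (m + 1 : ℝ) * γ)|) := by
  subst hp
  have hγ : Real.cos γ ≠ 0 := (Real.cos_pos_of_mem_Ioo ⟨by linarith, hγ1⟩).ne'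
  refine ⟨fun P h1 => ?_, fun P h1 => ?_⟩ <;>
    rw [P.totalLength_odd hγ hR.le, h1] <;>
    simp only [lineAngle, Bool.not_true, Bool.not_false, Bool.false_eq_true, ↓reduceIte] <;>
    ring_nf

/-- Let `m ≥ 1`, `γ ∈ (0, π/2)` with `γ < π/(2m)`, and `p = (R sin ψ, R cos ψ)` a
point of the wedge `W_γ` with `R > 0` and `π/2 − γ < ψ < π/2`.  Every closed
`(2m+1)`-bounce billiard path based at `p` whose first bounce is on `ℓ₀` has
total length `2R·|cos(ψ − mγ)|`, and every one whose first bounce is on `ℓ_γ`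
has total length `2R·|cos(ψ + (m+1)γ)|`. -/
theorem odd_bounce_length (m : ℕ) (hm : 1 ≤ m) (γ : ℝ)
    (hγ0 : 0 < γ) (hγ1 : γ < π / 2) (hγm : γ < π / (2 * m))
    (R ψ : ℝ) (hR : 0 < R) (hψ1 : π / 2 - γ < ψ) (hψ2 : ψ < π / 2)
    (p : E2) (hp : p = pt (R * Real.sin ψ) (R * Real.cos ψ)) :
    (∀ P : ClosedBounce γ p (2 * m + 1), P.horiz 1 = true →
      totalLength P = 2 * R * |Real.cos (ψ - m * γ)|) ∧
    (∀ P : ClosedBounce γ p (2 * m + 1), P.horiz 1 = false →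
      totalLength P = 2 * R * |Real.cos (ψ + (m + 1 : ℝ) * γ)|) :=
  odd_bounce_length_general m γ hγ0 hγ1 R ψ hR p hp

end
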